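/- Let α ∈ ℕ^{m×n} and let X ⊆ ℝⁿ be sign-symmetric, given by X = cl{ x : 0 < |x|, H(|x|) ≤ 1 } for continuous H : ℝⁿ → ℝ^r (absolute values taken entrywise). Set Y = { y : H(exp y) ≤ 1 }. Then c ∈ C_POLY-SAGE(α,X) if and only if the set SR(α,c) ∩ C_SAGE(α,Y) is nonempty, where SR(α,c) = { ĉ ∈ ℝᵐ : ĉᵢ = cᵢ whenever αᵢ ∈ (2ℕ)ⁿ, and ĉᵢ ≤ −|cᵢ| whenever αᵢ ∉ (2ℕ)ⁿ } is the set of signomial-representative coefficient vectors. -/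

import Mathlib

/-!
Write `|x| = exp y`. A monomial term `c x^a` equals `c |x|^a` when `a` is even, and is at least
`-|c| |x|^a` otherwise, with equality for a suitable choice of signs of `x`. Since `X` is
sign-symmetric, a polynomial AGE vector on `X` therefore has no non-even monomial besides its
distinguished one, and its signomial representative is an AGE vector over `Y`; these sum to a
representative of `c`. Conversely, by the sparsity of SAGE decompositions each (nonpositive)
non-even coefficient of a representative lives in a single AGE summand; putting back `cᵢ` there
only increases the polynomial on the sign-symmetric set, hence on its closure by continuity.
-/

open Finset

/-- Exponential-form signomial: `Sig α c x = ∑ i, c i * exp (αᵢ · x)`. -/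
noncomputable def Sig {n m : ℕ} (α : Fin m → Fin n → ℝ) (c : Fin m → ℝ)
    (x : Fin n → ℝ) : ℝ :=
  ∑ i, c i * Real.exp (∑ j, α i j * x j)

/-- The `k`-th conditional AGE cone. -/
def CAGE {n m : ℕ} (α : Fin m → Fin n → ℝ) (k : Fin m) (X : Set (Fin n → ℝ)) :
    Set (Fin m → ℝ) :=
  {c | (∀ i, i ≠ k → 0 ≤ c i) ∧ ∀ x ∈ X, 0 ≤ Sig α c x}

/-- The conditional SAGE cone: Minkowski sum of the conditional AGE cones. -/
def CSAGE {n m : ℕ} (α : Fin m → Fin n → ℝ) (X : Set (Fin n → ℝ)) :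
    Set (Fin m → ℝ) :=
  {c | ∃ d : Fin m → Fin m → ℝ, (∀ k, d k ∈ CAGE α k X) ∧ c = ∑ k, d k}

/-- A polynomial with exponent matrix `α` and coefficient vector `c`. -/
noncomputable def PolyFn {n m : ℕ} (α : Fin m → Fin n → ℕ) (c : Fin m → ℝ)
    (x : Fin n → ℝ) : ℝ :=
  ∑ i, c i * ∏ j, x j ^ α i j

/-- The `i`-th conditional AGE polynomial cone. -/
def CPolyAGE {n m : ℕ} (α : Fin m → Fin n → ℕ) (i : Fin m)
    (X : Set (Fin n → ℝ)) : Set (Fin m → ℝ) :=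
  {c | (∀ x ∈ X, 0 ≤ PolyFn α c x) ∧
       (∀ j, j ≠ i → (∃ x ∈ X, 0 < ∏ t, x t ^ α j t) → 0 ≤ c j) ∧
       (∀ j, j ≠ i → (∃ x ∈ X, ∏ t, x t ^ α j t < 0) → c j ≤ 0)}

/-- The conditional SAGE polynomial cone. -/
def CPolySAGE {n m : ℕ} (α : Fin m → Fin n → ℕ) (X : Set (Fin n → ℝ)) :
    Set (Fin m → ℝ) :=
  {c | ∃ d : Fin m → Fin m → ℝ, (∀ i, d i ∈ CPolyAGE α i X) ∧ c = ∑ i, d i}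

/-- The set of signomial-representative coefficient vectors. -/
def SR {n m : ℕ} (α : Fin m → Fin n → ℕ) (c : Fin m → ℝ) : Set (Fin m → ℝ) :=
  {ch | (∀ i, (∀ t, Even (α i t)) → ch i = c i) ∧
        (∀ i, ¬ (∀ t, Even (α i t)) → ch i ≤ -|c i|)}

section Signomial

variable {n m : ℕ} {α : Fin m → Fin n → ℝ} {Y : Set (Fin n → ℝ)}

lemma sig_add (f g : Fin m → ℝ) (x : Fin n → ℝ) : Sig α (f + g) x = Sig α f x + Sig α g x := by
  simp only [Sig, Pi.add_apply, add_mul, Finset.sum_add_distrib]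

lemma sig_smul (b : ℝ) (f : Fin m → ℝ) (x : Fin n → ℝ) : Sig α (b • f) x = b * Sig α f x := by
  simp only [Sig, Pi.smul_apply, smul_eq_mul, Finset.mul_sum, mul_assoc]

lemma smul_mem_CAGE {f : Fin m → ℝ} {k : Fin m} {b : ℝ} (hb : 0 ≤ b) (hf : f ∈ CAGE α k Y) :
    b • f ∈ CAGE α k Y := by
  refine ⟨fun i hi => mul_nonneg hb (hf.1 i hi), fun y hy => ?_⟩
  rw [sig_smul]
  exact mul_nonneg hb (hf.2 y hy)

lemma add_smul_mem_CAGE {f w : Fin m → ℝ} {j k : Fin m} (hf : f ∈ CAGE α k Y)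
    (hw : w ∈ CAGE α j Y) (hwj : w j = -1) (hkj : k ≠ j) :
    f + f j • w ∈ CAGE α k Y := by
  have hfj : 0 ≤ f j := hf.1 j hkj.symm
  refine ⟨fun i hik => ?_, fun y hy => ?_⟩
  · rcases eq_or_ne i j with rfl | hij
    · simp [hwj]
    · exact add_nonneg (hf.1 i hik) (mul_nonneg hfj (hw.1 i hij))
  · rw [sig_add, sig_smul]
    exact add_nonneg (hf.2 y hy) (mul_nonneg hfj (hw.2 y hy))

lemma CSAGE_empty : CSAGE α (∅ : Set (Fin n → ℝ)) = Set.univ := by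
  classical
  refine Set.eq_univ_of_forall fun c => ⟨fun k => Pi.single k (c k), fun k => ⟨?_, by simp⟩,
    (Finset.univ_sum_single c).symm⟩
  intro i hik
  simp [Pi.single_eq_of_ne hik]

lemma exists_isolate_column (d : Fin m → Fin m → ℝ) (hd : ∀ k, d k ∈ CAGE α k Y) (j : Fin m)
    (hj : ∑ k, d k j ≤ 0) :
    ∃ d' : Fin m → Fin m → ℝ, (∀ k, d' k ∈ CAGE α k Y) ∧ ∑ k, d' k = ∑ k, d k ∧
      (∀ k, k ≠ j → d' k j = 0) ∧ ∀ i, d j i = 0 → ∀ k, d' k i = d k i := by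
  classical
  have hoff : ∀ k ∈ Finset.univ.erase j, 0 ≤ d k j := fun k hk =>
    (hd k).1 j (Finset.ne_of_mem_erase hk).symm
  have hsplit : ∑ k, d k j = d j j + ∑ k ∈ Finset.univ.erase j, d k j :=
    (Finset.add_sum_erase _ _ (Finset.mem_univ j)).symm
  have hdjj : d j j ≤ 0 := by linarith [Finset.sum_nonneg hoff]
  rcases hdjj.eq_or_lt with hzero | hneg
  · refine ⟨d, hd, rfl, fun k hk => ?_, fun _ _ _ => rfl⟩
    have hsum : ∑ k ∈ Finset.univ.erase j, d k j = 0 :=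
      le_antisymm (by linarith) (Finset.sum_nonneg hoff)
    exact (Finset.sum_eq_zero_iff_of_nonneg hoff).1 hsum k (Finset.mem_erase.2 ⟨hk, by simp⟩)
  -- `w` is `d j` scaled to `w j = -1`; adding `d k j • w` to `d k` clears its `j`-th entry, and
  -- the coefficients `d k j - [k = j] ∑ l, d l j` sum to zero, so the total is unchanged.
  set w : Fin m → ℝ := (-d j j)⁻¹ • d j with hw_def
  have hw : w ∈ CAGE α j Y := smul_mem_CAGE (by simpa using hneg.le) (hd j)
  have hwj : w j = -1 := by simp [hw_def, hneg.ne]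
  set d' : Fin m → Fin m → ℝ :=
    fun k => d k + (d k j - (Pi.single j (∑ l, d l j) : Fin m → ℝ) k) • w with hd'_def
  have hd'_ne : ∀ k, k ≠ j → d' k = d k + d k j • w := fun k hk => by
    simp [hd'_def, Pi.single_eq_of_ne hk]
  have hd'_self : d' j = ((∑ l, d l j) / d j j) • d j := by
    ext i
    simp only [hd'_def, hw_def, Pi.add_apply, Pi.smul_apply, Pi.single_eq_same, smul_eq_mul]
    field_simp [hneg.ne]
    ring
  refine ⟨d', fun k => ?_, ?_, fun k hk => ?_, fun i hi k => by simp [hd'_def, hw_def, hi]⟩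
  · rcases eq_or_ne k j with rfl | hk
    · rw [hd'_self]
      exact smul_mem_CAGE (div_nonneg_of_nonpos hj hneg.le) (hd k)
    · rw [hd'_ne k hk]
      exact add_smul_mem_CAGE (hd k) hw hwj hk
  · simp [hd'_def, Finset.sum_add_distrib, ← Finset.sum_smul, Finset.sum_sub_distrib]
  · simp [hd'_ne k hk, hwj]

lemma exists_CAGE_decomp_isolating_nonpos {c : Fin m → ℝ} (hc : c ∈ CSAGE α Y) :
    ∃ d : Fin m → Fin m → ℝ, (∀ k, d k ∈ CAGE α k Y) ∧ c = ∑ k, d k ∧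
      ∀ j, c j ≤ 0 → ∀ k, k ≠ j → d k j = 0 := by
  classical
  suffices ∀ P : Finset (Fin m), (∀ j ∈ P, c j ≤ 0) → ∃ d : Fin m → Fin m → ℝ,
      (∀ k, d k ∈ CAGE α k Y) ∧ c = ∑ k, d k ∧ ∀ j ∈ P, ∀ k, k ≠ j → d k j = 0 by
    obtain ⟨d, hd, hsum, hiso⟩ := this (Finset.univ.filter (c · ≤ 0)) (by simp)
    exact ⟨d, hd, hsum, fun j hj => hiso j (by simpa using hj)⟩
  intro P
  induction P using Finset.induction_on with
  | empty =>
    obtain ⟨d, hd, hsum⟩ := hc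
    exact fun _ => ⟨d, hd, hsum, by simp⟩
  | insert j P hjP ih =>
    intro hP
    obtain ⟨d, hd, rfl, hiso⟩ := ih fun i hi => hP i (Finset.mem_insert_of_mem hi)
    obtain ⟨d', hd', hsum, hj, hkeep⟩ :=
      exists_isolate_column d hd j (by simpa using hP j (Finset.mem_insert_self j P))
    refine ⟨d', hd', hsum.symm, fun i hi k hk => ?_⟩
    rcases Finset.mem_insert.1 hi with rfl | hiP
    · exact hj k hk
    · have hji : j ≠ i := fun h => hjP (h ▸ hiP)
      rw [hkeep i (hiso i hiP j hji) k, hiso i hiP k hk]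

end Signomial

section Polynomial

variable {n m : ℕ}

def sigRep (α : Fin m → Fin n → ℕ) (c : Fin m → ℝ) : Fin m → ℝ :=
  fun i => if ∀ t, Even (α i t) then c i else -|c i|

lemma sigRep_mem_SR (α : Fin m → Fin n → ℕ) (c : Fin m → ℝ) : sigRep α c ∈ SR α c :=
  ⟨fun _ hi => if_pos hi, fun _ hi => (if_neg hi).le⟩

lemma sigRep_sum {α : Fin m → Fin n → ℕ} (e : Fin m → Fin m → ℝ)
    (he : ∀ i j, j ≠ i → ¬ (∀ t, Even (α j t)) → e i j = 0) :
    sigRep α (∑ i, e i) = ∑ i, sigRep α (e i) := by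
  ext j
  simp only [sigRep, Finset.sum_apply]
  split_ifs with hj
  · rfl
  · rw [Finset.sum_eq_single j (fun i _ hij => he i j (Ne.symm hij) hj) (by simp),
      Finset.sum_eq_single j (fun i _ hij => by simp [he i j (Ne.symm hij) hj]) (by simp)]

lemma sig_eq_polyFn (α : Fin m → Fin n → ℕ) (c : Fin m → ℝ) (y : Fin n → ℝ) :
    Sig (fun i j => (α i j : ℝ)) c y = PolyFn α c fun t => Real.exp (y t) := by
  simp only [Sig, PolyFn, Real.exp_sum, Real.exp_nat_mul]

lemma continuous_polyFn (α : Fin m → Fin n → ℕ) (c : Fin m → ℝ) : Continuous (PolyFn α c) := by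
  unfold PolyFn
  fun_prop

lemma prod_pow_congr_abs_of_even {a : Fin n → ℕ} (ha : ∀ t, Even (a t)) {u v : Fin n → ℝ}
    (huv : ∀ t, |u t| = |v t|) : ∏ t, u t ^ a t = ∏ t, v t ^ a t :=
  Finset.prod_congr rfl fun t _ => by rw [← (ha t).pow_abs, huv t, (ha t).pow_abs]

lemma prod_update_neg_pow (x : Fin n → ℝ) (a : Fin n → ℕ) {t₀ : Fin n} (ht₀ : Odd (a t₀)) :
    ∏ t, Function.update x t₀ (-x t₀) t ^ a t = -∏ t, x t ^ a t := by
  classical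
  rw [Fintype.prod_eq_mul_prod_compl t₀, Fintype.prod_eq_mul_prod_compl t₀ fun t => x t ^ a t,
    Function.update_self, ht₀.neg_pow, neg_mul,
    Finset.prod_congr rfl fun t ht => by rw [Function.update_of_ne (by simpa using ht)]]

lemma exists_abs_eq_mul_prod_eq_neg_abs {a : Fin n → ℕ} (ha : ¬ ∀ t, Even (a t))
    (x : Fin n → ℝ) (b : ℝ) :
    ∃ x' : Fin n → ℝ, (∀ t, |x' t| = |x t|) ∧
      b * ∏ t, x' t ^ a t = -|b| * ∏ t, |x t| ^ a t := by
  obtain ⟨t₀, ht₀⟩ := not_forall.1 ha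
  rcases le_or_gt 0 b with hb | hb
  · refine ⟨Function.update (fun t => |x t|) t₀ (-|x t₀|), fun t => ?_, ?_⟩
    · rcases eq_or_ne t t₀ with rfl | ht
      · simp
      · simp [Function.update_of_ne ht]
    · rw [prod_update_neg_pow _ _ (Nat.not_even_iff_odd.1 ht₀), abs_of_nonneg hb]
      ring
  · exact ⟨fun t => |x t|, fun t => abs_abs (x t), by rw [abs_of_neg hb]; ring⟩

lemma exists_abs_eq_mul_prod_eq_sigRep (α : Fin m → Fin n → ℕ) (p : Fin m → ℝ) (i : Fin m)
    (x : Fin n → ℝ) :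
    ∃ x' : Fin n → ℝ, (∀ t, |x' t| = |x t|) ∧
      p i * ∏ t, x' t ^ α i t = sigRep α p i * ∏ t, |x t| ^ α i t := by
  by_cases hi : ∀ t, Even (α i t)
  · refine ⟨x, fun _ => rfl, ?_⟩
    rw [sigRep, if_pos hi, prod_pow_congr_abs_of_even hi fun t => (abs_abs (x t)).symm]
  · rw [sigRep, if_neg hi]
    exact exists_abs_eq_mul_prod_eq_neg_abs hi x (p i)

lemma exists_abs_eq_polyFn_eq_sigRep {α : Fin m → Fin n → ℕ} {p : Fin m → ℝ} {i : Fin m}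
    (hp : ∀ j, j ≠ i → ¬ (∀ t, Even (α j t)) → p j = 0) (x : Fin n → ℝ) :
    ∃ x' : Fin n → ℝ, (∀ t, |x' t| = |x t|) ∧
      PolyFn α p x' = PolyFn α (sigRep α p) fun t => |x t| := by
  obtain ⟨x', hx', hi⟩ := exists_abs_eq_mul_prod_eq_sigRep α p i x
  refine ⟨x', hx', Finset.sum_congr rfl fun j _ => ?_⟩
  rcases eq_or_ne j i with rfl | hji
  · exact hi
  by_cases hj : ∀ t, Even (α j t)
  · rw [sigRep, if_pos hj,
      prod_pow_congr_abs_of_even hj (v := fun t => |x t|) fun t => by rw [hx', abs_abs]]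
  · simp [sigRep, hp j hji hj]

lemma polyFn_abs_le_of_mem_SR {α : Fin m → Fin n → ℕ} {p q : Fin m → ℝ} (hq : q ∈ SR α p)
    (x : Fin n → ℝ) : PolyFn α q (fun t => |x t|) ≤ PolyFn α p x := by
  refine Finset.sum_le_sum fun j _ => ?_
  by_cases hj : ∀ t, Even (α j t)
  · rw [hq.1 j hj, prod_pow_congr_abs_of_even hj fun t => abs_abs (x t)]
  · have hprod : 0 ≤ ∏ t, |x t| ^ α j t := by positivity
    have habs : |p j * ∏ t, x t ^ α j t| = |p j| * ∏ t, |x t| ^ α j t := by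
      simp [abs_mul, Finset.abs_prod, abs_pow]
    calc q j * ∏ t, |x t| ^ α j t ≤ -|p j| * ∏ t, |x t| ^ α j t :=
          mul_le_mul_of_nonneg_right (hq.2 j hj) hprod
      _ = -|p j * ∏ t, x t ^ α j t| := by rw [habs, neg_mul]
      _ ≤ p j * ∏ t, x t ^ α j t := neg_abs_le _

end Polynomial

section SignSymmetric

variable {n m : ℕ}

def signedExpImage (Y : Set (Fin n → ℝ)) : Set (Fin n → ℝ) :=
  {x | ∃ y ∈ Y, ∀ t, |x t| = Real.exp (y t)}

lemma setOf_abs_eq_signedExpImage (P : (Fin n → ℝ) → Prop) :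
    {x : Fin n → ℝ | (∀ j, 0 < |x j|) ∧ P fun j => |x j|} =
      signedExpImage {y | P fun j => Real.exp (y j)} := by
  ext x
  constructor
  · rintro ⟨hx, hP⟩
    have hlog : ∀ t, Real.exp (Real.log |x t|) = |x t| := fun t => Real.exp_log (hx t)
    exact ⟨fun t => Real.log |x t|, show P fun t => _ by simpa only [hlog] using hP,
      fun t => (hlog t).symm⟩
  · rintro ⟨y, hy, hxy⟩
    simp only [Set.mem_ofPred_eq, hxy]
    exact ⟨fun _ => Real.exp_pos _, hy⟩

variable {Y : Set (Fin n → ℝ)} {α : Fin m → Fin n → ℕ} {i : Fin m} {X : Set (Fin n → ℝ)}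
  {e : Fin m → ℝ}

lemma exp_mem_signedExpImage {y : Fin n → ℝ} (hy : y ∈ Y) :
    (fun t => Real.exp (y t)) ∈ signedExpImage Y :=
  ⟨y, hy, fun _ => abs_of_pos (Real.exp_pos _)⟩

lemma mem_signedExpImage_of_abs_eq {x x' : Fin n → ℝ} (hx : x ∈ signedExpImage Y)
    (hx' : ∀ t, |x' t| = |x t|) : x' ∈ signedExpImage Y := by
  obtain ⟨y, hy, hxy⟩ := hx
  exact ⟨y, hy, fun t => (hx' t).trans (hxy t)⟩

lemma coeff_nonneg_of_mem_CPolyAGE (he : e ∈ CPolyAGE α i X) (hYX : signedExpImage Y ⊆ X)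
    (hY : Y.Nonempty) {j : Fin m} (hji : j ≠ i) : 0 ≤ e j := by
  obtain ⟨y, hy⟩ := hY
  exact he.2.1 j hji ⟨_, hYX (exp_mem_signedExpImage hy), by positivity⟩

lemma coeff_eq_zero_of_mem_CPolyAGE (he : e ∈ CPolyAGE α i X) (hYX : signedExpImage Y ⊆ X)
    (hY : Y.Nonempty) {j : Fin m} (hji : j ≠ i) (hj : ¬ ∀ t, Even (α j t)) : e j = 0 := by
  obtain ⟨y, hy⟩ := hY
  obtain ⟨x, hx, hneg⟩ := exists_abs_eq_mul_prod_eq_neg_abs hj (fun t => Real.exp (y t)) 1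
  have hxX : x ∈ X := hYX (mem_signedExpImage_of_abs_eq (exp_mem_signedExpImage hy) hx)
  refine le_antisymm (he.2.2 j hji ⟨x, hxX, ?_⟩)
    (coeff_nonneg_of_mem_CPolyAGE he hYX ⟨y, hy⟩ hji)
  rw [one_mul, abs_one, neg_one_mul] at hneg
  rw [hneg, neg_neg_iff_pos]
  positivity

lemma sigRep_mem_CAGE (he : e ∈ CPolyAGE α i X) (hYX : signedExpImage Y ⊆ X)
    (hY : Y.Nonempty) : sigRep α e ∈ CAGE (fun i j => (α i j : ℝ)) i Y := by
  refine ⟨fun j hji => ?_, fun y hy => ?_⟩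
  · by_cases hj : ∀ t, Even (α j t)
    · simpa [sigRep, hj] using coeff_nonneg_of_mem_CPolyAGE he hYX hY hji
    · simp [sigRep, hj, coeff_eq_zero_of_mem_CPolyAGE he hYX hY hji hj]
  · obtain ⟨x, hx, hpoly⟩ := exists_abs_eq_polyFn_eq_sigRep
      (fun j hji hj => coeff_eq_zero_of_mem_CPolyAGE he hYX hY hji hj) fun t => Real.exp (y t)
    have hxX : x ∈ X := hYX (mem_signedExpImage_of_abs_eq (exp_mem_signedExpImage hy) hx)
    have habs : (fun t => Real.exp (y t)) = fun t => |Real.exp (y t)| :=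
      funext fun t => (abs_of_pos (Real.exp_pos _)).symm
    rw [sig_eq_polyFn, habs, ← hpoly]
    exact he.1 x hxX

lemma mem_CPolyAGE_of_mem_SR {d : Fin m → ℝ} (hd : d ∈ CAGE (fun i j => (α i j : ℝ)) i Y)
    (hde : d ∈ SR α e) (he : ∀ j, j ≠ i → ¬ (∀ t, Even (α j t)) → e j = 0) :
    e ∈ CPolyAGE α i (closure (signedExpImage Y)) := by
  refine ⟨fun x hx => ?_, fun j hji _ => ?_, fun j hji hneg => ?_⟩
  · refine closure_minimal (fun z hz => ?_)
      (isClosed_le continuous_const (continuous_polyFn α e)) hx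
    obtain ⟨y, hy, hzy⟩ := hz
    calc (0 : ℝ) ≤ PolyFn α d fun t => |z t| := by
          simpa only [sig_eq_polyFn, ← hzy] using hd.2 y hy
      _ ≤ PolyFn α e z := polyFn_abs_le_of_mem_SR hde z
  · by_cases hj : ∀ t, Even (α j t)
    · exact hde.1 j hj ▸ hd.1 j hji
    · exact (he j hji hj).ge
  · by_cases hj : ∀ t, Even (α j t)
    · obtain ⟨x, -, hx⟩ := hneg
      exact absurd hx (Finset.prod_nonneg fun t _ => (hj t).pow_nonneg _).not_gt
    · exact (he j hji hj).le

end SignSymmetric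

section Main

variable {n m : ℕ} {α : Fin m → Fin n → ℕ} {Y : Set (Fin n → ℝ)} {c : Fin m → ℝ}

lemma exists_mem_SR_inter_CSAGE_of_mem_CPolySAGE {X : Set (Fin n → ℝ)}
    (hYX : signedExpImage Y ⊆ X) (hc : c ∈ CPolySAGE α X) :
    (SR α c ∩ CSAGE (fun i j => (α i j : ℝ)) Y).Nonempty := by
  refine ⟨sigRep α c, sigRep_mem_SR α c, ?_⟩
  rcases Y.eq_empty_or_nonempty with rfl | hY
  · rw [CSAGE_empty]
    trivial
  obtain ⟨e, he, rfl⟩ := hc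
  refine ⟨fun i => sigRep α (e i), fun i => sigRep_mem_CAGE (he i) hYX hY, sigRep_sum e ?_⟩
  exact fun i j hji hj => coeff_eq_zero_of_mem_CPolyAGE (he i) hYX hY hji hj

lemma mem_CPolySAGE_of_mem_SR_inter_CSAGE
    (hc : (SR α c ∩ CSAGE (fun i j => (α i j : ℝ)) Y).Nonempty) :
    c ∈ CPolySAGE α (closure (signedExpImage Y)) := by
  obtain ⟨ch, hSR, hch⟩ := hc
  obtain ⟨d, hd, rfl, hiso⟩ := exists_CAGE_decomp_isolating_nonpos hch
  have hodd : ∀ j, ¬ (∀ t, Even (α j t)) → ∀ k, k ≠ j → d k j = 0 := fun j hj =>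
    hiso j ((hSR.2 j hj).trans (neg_nonpos.2 (abs_nonneg _)))
  have hdiag : ∀ j, ¬ (∀ t, Even (α j t)) → d j j = (∑ k, d k) j := fun j hj => by
    rw [Finset.sum_apply, Finset.sum_eq_single j (fun k _ hkj => hodd j hj k hkj) (by simp)]
  classical
  set e : Fin m → Fin m → ℝ :=
    fun k j => if ∀ t, Even (α j t) then d k j else if j = k then c j else 0 with he_def
  -- the isolation of the non-even columns makes `d k` a signomial representative of `e k`
  refine ⟨e, fun k => mem_CPolyAGE_of_mem_SR (hd k) ⟨fun j hj => ?_, fun j hj => ?_⟩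
    fun j hjk hj => by simp [he_def, hj, hjk], ?_⟩
  · simp [he_def, hj]
  · rcases eq_or_ne j k with rfl | hjk
    · simpa [he_def, hj, hdiag j hj] using hSR.2 j hj
    · simp [he_def, hj, hjk, hodd j hj k hjk.symm]
  · ext j
    by_cases hj : ∀ t, Even (α j t)
    · simpa [he_def, hj] using (hSR.1 j hj).symm
    · simp [he_def, hj]

theorem mem_CPolySAGE_closure_signedExpImage_iff :
    c ∈ CPolySAGE α (closure (signedExpImage Y)) ↔
      (SR α c ∩ CSAGE (fun i j => (α i j : ℝ)) Y).Nonempty :=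
  ⟨exists_mem_SR_inter_CSAGE_of_mem_CPolySAGE subset_closure,
    mem_CPolySAGE_of_mem_SR_inter_CSAGE⟩

end Main

theorem cpolysage_iff_sigrep_general {n m r : ℕ} (α : Fin m → Fin n → ℕ)
    (H : (Fin n → ℝ) → (Fin r → ℝ))
    (X : Set (Fin n → ℝ))
    (hX : X = closure {x : Fin n → ℝ | (∀ j, 0 < |x j|) ∧ ∀ s, H (fun j => |x j|) s ≤ 1})
    (c : Fin m → ℝ) :
    c ∈ CPolySAGE α X ↔
      (SR α c ∩
        CSAGE (fun i j => (α i j : ℝ))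
          {y : Fin n → ℝ | ∀ s, H (fun j => Real.exp (y j)) s ≤ 1}).Nonempty := by
  rw [hX, setOf_abs_eq_signedExpImage fun z => ∀ s, H z s ≤ 1]
  exact mem_CPolySAGE_closure_signedExpImage_iff

/-- For sign-symmetric X, membership in the conditional SAGE polynomial cone is
equivalent to existence of a signomial representative in the conditional SAGE
signomial cone over Y. -/
theorem cpolysage_iff_sigrep {n m r : ℕ} (α : Fin m → Fin n → ℕ)
    (H : (Fin n → ℝ) → (Fin r → ℝ)) (hH : Continuous H)
    (X : Set (Fin n → ℝ))
    (hX : X = closure {x : Fin n → ℝ | (∀ j, 0 < |x j|) ∧ ∀ s, H (fun j => |x j|) s ≤ 1})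
    (c : Fin m → ℝ) :
    c ∈ CPolySAGE α X ↔
      (SR α c ∩
        CSAGE (fun i j => (α i j : ℝ))
          {y : Fin n → ℝ | ∀ s, H (fun j => Real.exp (y j)) s ≤ 1}).Nonempty :=
  cpolysage_iff_sigrep_general α H X hX c
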